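/- Let p^mex(m,n) denote the number of partitions of n whose minimal excludant equals m. Then for every complex number z and positive integer n, Σ_{m≥1} p^mex(m,n) z^m = p(n) + (z−1) Σ_{m≥0} p(n − m(m+1)/2) z^m, where p(k) = 0 for k < 0. -/

import Mathlib

/-!
A partition has `mex > m` exactly when it contains each of `1, …, m`, and removing one copy of
each of them is a bijection onto the partitions of `n - m(m+1)/2`. Hence the number of partitions
of `n` with `mex > m` is `p(n - m(m+1)/2)`, so `p^mex(m+1, n) = p(n - m(m+1)/2) - p(n - (m+1)(m+2)/2)`,
and the identity is summation by parts, whose boundary term vanishes since `(n+1)(n+2)/2 > n`.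
-/

open Finset

/-- The minimal excludant of a partition: the least positive integer not a part. -/
noncomputable def mex {n : ℕ} (π : Nat.Partition n) : ℕ :=
  sInf {m : ℕ | 0 < m ∧ m ∉ π.parts}

/-- Number of partitions of `n` with minimal excludant `m`. -/
noncomputable def pmex (m n : ℕ) : ℕ :=
  ((Finset.univ : Finset (Nat.Partition n)).filter (fun π => mex π = m)).card

/-- The partition function, extended by `0` on negative integers. -/
noncomputable def pz (k : ℤ) : ℕ := if 0 ≤ k then Fintype.card (Nat.Partition k.toNat) else 0

/-- Number of partitions of `m` into distinct parts. -/
def qdist (m : ℕ) : ℕ := (Nat.Partition.distincts m).card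

/-- A two-colored distinct-parts partition of `n`: a set of distinct (part, color)
pairs with positive parts summing to `n`. -/
def IsTCD (n : ℕ) (s : Finset (ℕ × Fin 2)) : Prop :=
  (∀ p ∈ s, 0 < p.1) ∧ ∑ p ∈ s, p.1 = n

noncomputable def D2 (n : ℕ) : ℕ := Set.ncard {s : Finset (ℕ × Fin 2) | IsTCD n s}
noncomputable def D2e (n : ℕ) : ℕ :=
  Set.ncard {s : Finset (ℕ × Fin 2) | IsTCD n s ∧ Even s.card}
noncomputable def D2o (n : ℕ) : ℕ :=
  Set.ncard {s : Finset (ℕ × Fin 2) | IsTCD n s ∧ Odd s.card}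

theorem Finset.sum_Icc_one_id_mul_two (m : ℕ) : (∑ i ∈ Icc 1 m, i) * 2 = m * (m + 1) := by
  induction m with
  | zero => rfl
  | succ m ih => rw [sum_Icc_succ_top (by omega), add_mul, ih]; ring

theorem Finset.sum_Icc_one_id (m : ℕ) : ∑ i ∈ Icc 1 m, i = m * (m + 1) / 2 := by
  rw [← sum_Icc_one_id_mul_two, Nat.mul_div_cancel _ two_pos]

theorem Finset.sum_range_sub_mul_pow_succ {R : Type*} [CommRing R] (f : ℕ → R) (z : R) (N : ℕ) :
    ∑ i ∈ range N, (f i - f (i + 1)) * z ^ (i + 1) =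
      f 0 - f N * z ^ N + (z - 1) * ∑ i ∈ range N, f i * z ^ i := by
  induction N with
  | zero => simp
  | succ N ih => rw [sum_range_succ, ih, sum_range_succ]; ring

namespace Nat.Partition

variable {n : ℕ}

theorem sum_parts_tsub_add_sum {π : n.Partition} {s : Multiset ℕ} (hs : s ≤ π.parts) :
    (π.parts - s).sum + s.sum = n := by
  rw [← Multiset.sum_add, tsub_add_cancel_of_le hs, π.parts_sum]

def removeSubmultiset {s : Multiset ℕ} (hs : ∀ i ∈ s, 0 < i) (hsum : s.sum ≤ n) :
    {π : n.Partition // s ≤ π.parts} ≃ (n - s.sum).Partition where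
  toFun π :=
    { parts := π.1.parts - s
      parts_pos := fun hi => π.1.parts_pos (Multiset.mem_of_le tsub_le_self hi)
      parts_sum := by have := sum_parts_tsub_add_sum π.2; omega }
  invFun σ :=
    ⟨{ parts := σ.parts + s
       parts_pos := fun hi => (Multiset.mem_add.mp hi).elim σ.parts_pos (hs _)
       parts_sum := by rw [Multiset.sum_add, σ.parts_sum]; omega },
      Multiset.le_add_left _ _⟩
  left_inv π := Subtype.ext (Nat.Partition.ext (tsub_add_cancel_of_le π.2))
  right_inv σ := Nat.Partition.ext (add_tsub_cancel_right _ _)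

theorem card_filter_le_parts {s : Multiset ℕ} (hs : ∀ i ∈ s, 0 < i) (hsum : s.sum ≤ n) :
    #{π : n.Partition | s ≤ π.parts} = Fintype.card (n - s.sum).Partition := by
  rw [← Fintype.card_subtype]
  exact Fintype.card_congr (removeSubmultiset hs hsum)

theorem card_filter_le_parts_of_lt {s : Multiset ℕ} (hsum : n < s.sum) :
    #{π : n.Partition | s ≤ π.parts} = 0 := by
  rw [Finset.card_eq_zero, filter_eq_empty_iff]
  intro π _ hs
  have := sum_parts_tsub_add_sum hs
  omega

theorem exists_pos_notMem_parts (π : n.Partition) : ∃ m, 0 < m ∧ m ∉ π.parts :=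
  ⟨n + 1, n.succ_pos, fun h => by have := π.le_of_mem_parts h; omega⟩

end Nat.Partition

theorem lt_mex_iff {n : ℕ} (π : n.Partition) (m : ℕ) :
    m < mex π ↔ (Icc 1 m).val ≤ π.parts := by
  rw [val_le_iff_val_subset, Multiset.subset_iff]
  simp only [mem_val, mem_Icc]
  constructor
  · intro h k ⟨hk, hkm⟩
    by_contra hnot
    exact Nat.notMem_of_lt_sInf (lt_of_le_of_lt hkm h) ⟨hk, hnot⟩
  · intro h
    by_contra! hle
    obtain ⟨hpos, hnot⟩ := Nat.sInf_mem π.exists_pos_notMem_parts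
    exact hnot (h ⟨hpos, hle⟩)

theorem pz_sub_of_lt {n k : ℕ} (h : n < k) : pz ((n : ℤ) - k) = 0 := by
  rw [pz, if_neg (by omega)]

theorem card_filter_lt_mex (n m : ℕ) :
    #{π : n.Partition | m < mex π} = pz ((n : ℤ) - (m * (m + 1) / 2 : ℕ)) := by
  have hpos : ∀ i ∈ (Icc 1 m).val, 0 < i := fun i hi => (mem_Icc.mp (mem_val.mp hi)).1
  have hsum_eq : (Icc 1 m).val.sum = m * (m + 1) / 2 := by
    rw [sum_val, ← sum_Icc_one_id]; rfl
  simp only [lt_mex_iff]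
  rcases le_or_gt (m * (m + 1) / 2) n with hsum | hsum
  · have htoNat : ((n : ℤ) - (m * (m + 1) / 2 : ℕ)).toNat = n - m * (m + 1) / 2 := by omega
    rw [Nat.Partition.card_filter_le_parts hpos (hsum_eq ▸ hsum), pz, if_pos (by omega), htoNat,
      hsum_eq]
  · rw [pz_sub_of_lt hsum, Nat.Partition.card_filter_le_parts_of_lt (hsum_eq ▸ hsum)]

theorem pmex_add_card_filter_lt_mex (n m : ℕ) :
    pmex (m + 1) n + #{π : n.Partition | m + 1 < mex π} = #{π : n.Partition | m < mex π} := by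
  rw [pmex, ← card_union_of_disjoint (disjoint_filter.mpr fun _ _ h => by omega), ← filter_or]
  congr 1
  exact filter_congr fun π _ => by omega

theorem master_proposition_general (z : ℂ) (n : ℕ) :
    ∑ m ∈ Finset.Icc 1 (n + 1), (pmex m n : ℂ) * z ^ m =
      (pz n : ℂ) + (z - 1) * ∑ m ∈ Finset.range (n + 1),
        (pz ((n : ℤ) - (m * (m + 1) / 2 : ℕ)) : ℂ) * z ^ m := by
  set f : ℕ → ℂ := fun m => (pz ((n : ℤ) - (m * (m + 1) / 2 : ℕ)) : ℂ) with hf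
  have hpmex (m : ℕ) : (pmex (m + 1) n : ℂ) = f m - f (m + 1) := by
    have h := pmex_add_card_filter_lt_mex n m
    rw [card_filter_lt_mex, card_filter_lt_mex] at h
    simp only [hf]
    rw [← h]
    push_cast
    ring
  have hf_top : f (n + 1) = 0 := by
    have : n < (n + 1) * (n + 1 + 1) / 2 :=
      (Nat.le_div_iff_mul_le two_pos).mpr (Nat.mul_le_mul_left _ (by omega))
    simp only [hf]
    rw [pz_sub_of_lt this, Nat.cast_zero]
  have hf_zero : f 0 = pz n := by simp [hf]
  rw [← Ico_add_one_right_eq_Icc, sum_Ico_eq_sum_range]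
  simp only [add_tsub_cancel_right, add_comm 1, hpmex]
  rw [sum_range_sub_mul_pow_succ, hf_top, hf_zero, zero_mul, sub_zero]

theorem master_proposition (z : ℂ) (n : ℕ) (hn : 0 < n) :
    ∑ m ∈ Finset.Icc 1 (n + 1), (pmex m n : ℂ) * z ^ m =
      (pz n : ℂ) + (z - 1) * ∑ m ∈ Finset.range (n + 1),
        (pz ((n : ℤ) - (m * (m + 1) / 2 : ℕ)) : ℂ) * z ^ m :=
  master_proposition_general z n
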